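/- Let (x_t), (w_t) be nonnegative sequences with x_{t+1}² ≤ β x_t² + γ w_t² + ε where 0 ≤ β < 1, γ, ε ≥ 0, and w_t ≤ r^t w₀ + c with 0 ≤ r < 1, c ≥ 0. Then for all t ≥ 1, x_t² ≤ β^t x₀² + 2γ w₀² · t · (max(β, r²))^{t−1} + (2γc² + ε)/(1 − β). -/

import Mathlib

/-!
Unrolling `a (t+1) ≤ β a t + b t` gives `a t ≤ β^t a 0 + ∑_{s<t} β^(t-1-s) b s`. Squaring
`w s ≤ r^s w₀ + c` with `(u + c)² ≤ 2u² + 2c²` lets us take `b s = 2γw₀²(r²)^s + 2γc² + ε`.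
In the resulting convolution each of the `t` terms `β^(t-1-s) (r²)^s` is at most
`max β r² ^ (t-1)`, and the constant part is a geometric sum bounded by `1/(1-β)`.
-/

open Finset

theorem le_pow_mul_add_sum_of_le_mul_add {R : Type*} [CommSemiring R] [PartialOrder R]
    [IsOrderedRing R] {a b : ℕ → R} {β : R} (hβ : 0 ≤ β)
    (h : ∀ t, a (t + 1) ≤ β * a t + b t) (t : ℕ) :
    a t ≤ β ^ t * a 0 + ∑ s ∈ range t, β ^ (t - 1 - s) * b s := by
  induction t with
  | zero => simp
  | succ t ih =>
    have hshift : β * ∑ s ∈ range t, β ^ (t - 1 - s) * b s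
        = ∑ s ∈ range t, β ^ (t + 1 - 1 - s) * b s := by
      rw [mul_sum]
      refine sum_congr rfl fun s hs => ?_
      rw [← mul_assoc, ← pow_succ', show t - 1 - s + 1 = t + 1 - 1 - s by
        have := mem_range.1 hs; omega]
    calc a (t + 1) ≤ β * (β ^ t * a 0 + ∑ s ∈ range t, β ^ (t - 1 - s) * b s) + b t :=
          (h t).trans (by gcongr)
      _ = β ^ (t + 1) * a 0 + ∑ s ∈ range (t + 1), β ^ (t + 1 - 1 - s) * b s := by
          rw [mul_add, hshift, sum_range_succ, Nat.add_sub_cancel, Nat.sub_self, pow_zero,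
            one_mul, pow_succ', mul_assoc, add_assoc]

theorem sum_pow_mul_pow_le_mul_max_pow {R : Type*} [CommSemiring R] [LinearOrder R]
    [IsOrderedRing R] {β ρ : R} (hβ : 0 ≤ β) (hρ : 0 ≤ ρ) (t : ℕ) :
    ∑ s ∈ range t, β ^ (t - 1 - s) * ρ ^ s ≤ t * max β ρ ^ (t - 1) := by
  calc ∑ s ∈ range t, β ^ (t - 1 - s) * ρ ^ s ≤ ∑ _s ∈ range t, max β ρ ^ (t - 1) := by
        refine sum_le_sum fun s hs => ?_
        calc β ^ (t - 1 - s) * ρ ^ s ≤ max β ρ ^ (t - 1 - s) * max β ρ ^ s := by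
              gcongr; exacts [le_max_left _ _, le_max_right _ _]
          _ = max β ρ ^ (t - 1) := by
              rw [← pow_add, Nat.sub_add_cancel (by have := mem_range.1 hs; omega)]
    _ = t * max β ρ ^ (t - 1) := by rw [sum_const, card_range, nsmul_eq_mul]

theorem sum_range_pow_sub_le_one_div_one_sub {K : Type*} [Field K] [LinearOrder K]
    [IsStrictOrderedRing K] {β : K} (hβ0 : 0 ≤ β) (hβ1 : β < 1) (t : ℕ) :
    ∑ s ∈ range t, β ^ (t - 1 - s) ≤ 1 / (1 - β) := by
  rw [sum_range_reflect (fun s => β ^ s), range_eq_Ico]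
  simpa using geom_sum_Ico_le_of_lt_one (m := 0) (n := t) hβ0 hβ1

theorem sq_le_two_mul_sq_add_two_mul_sq {R : Type*} [CommRing R] [LinearOrder R]
    [IsStrictOrderedRing R] {w u c : R} (hw : 0 ≤ w) (h : w ≤ u + c) :
    w ^ 2 ≤ 2 * u ^ 2 + 2 * c ^ 2 := by
  nlinarith [sq_nonneg (u - c)]

theorem stmt_16_general (β γ ε r c : ℝ)
    (hβ0 : 0 ≤ β) (hβ1 : β < 1) (hγ : 0 ≤ γ) (hε : 0 ≤ ε)
    (x w : ℕ → ℝ) (hw : ∀ t, 0 ≤ w t)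
    (hrec : ∀ t, x (t + 1) ^ 2 ≤ β * x t ^ 2 + γ * w t ^ 2 + ε)
    (hwt : ∀ t, w t ≤ r ^ t * w 0 + c) :
    ∀ t, 1 ≤ t →
      x t ^ 2 ≤ β ^ t * x 0 ^ 2
        + 2 * γ * w 0 ^ 2 * t * (max β (r ^ 2)) ^ (t - 1)
        + (2 * γ * c ^ 2 + ε) / (1 - β) := by
  intro t _
  have hstep (s : ℕ) : x (s + 1) ^ 2 ≤
      β * x s ^ 2 + (2 * γ * w 0 ^ 2 * (r ^ 2) ^ s + (2 * γ * c ^ 2 + ε)) :=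
    calc x (s + 1) ^ 2 ≤ β * x s ^ 2 + γ * w s ^ 2 + ε := hrec s
      _ ≤ β * x s ^ 2 + γ * (2 * (r ^ s * w 0) ^ 2 + 2 * c ^ 2) + ε := by
          gcongr; exact sq_le_two_mul_sq_add_two_mul_sq (hw s) (hwt s)
      _ = _ := by ring
  calc x t ^ 2
      ≤ β ^ t * x 0 ^ 2 + ∑ s ∈ range t,
          β ^ (t - 1 - s) * (2 * γ * w 0 ^ 2 * (r ^ 2) ^ s + (2 * γ * c ^ 2 + ε)) :=
        le_pow_mul_add_sum_of_le_mul_add (a := fun s => x s ^ 2) hβ0 hstep t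
    _ = β ^ t * x 0 ^ 2 + 2 * γ * w 0 ^ 2 * ∑ s ∈ range t, β ^ (t - 1 - s) * (r ^ 2) ^ s
          + (2 * γ * c ^ 2 + ε) * ∑ s ∈ range t, β ^ (t - 1 - s) := by
        rw [add_assoc, mul_sum, mul_sum, ← sum_add_distrib]
        exact congrArg _ (sum_congr rfl fun s _ => by ring)
    _ ≤ β ^ t * x 0 ^ 2 + 2 * γ * w 0 ^ 2 * (t * max β (r ^ 2) ^ (t - 1))
          + (2 * γ * c ^ 2 + ε) * (1 / (1 - β)) := by
        gcongr
        · exact sum_pow_mul_pow_le_mul_max_pow hβ0 (sq_nonneg r) t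
        · exact sum_range_pow_sub_le_one_div_one_sub hβ0 hβ1 t
    _ = _ := by ring

/-- coupled recursion `x_{t+1}² ≤ β x_t² + γ w_t² + ε`,
`w_t ≤ r^t w₀ + c` gives
`x_t² ≤ β^t x₀² + 2γ w₀² t (max β r²)^{t-1} + (2γc² + ε)/(1-β)` for `t ≥ 1`. -/
theorem stmt_16 (β γ ε r c : ℝ)
    (hβ0 : 0 ≤ β) (hβ1 : β < 1) (hγ : 0 ≤ γ) (hε : 0 ≤ ε)
    (hr0 : 0 ≤ r) (hr1 : r < 1) (hc : 0 ≤ c)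
    (x w : ℕ → ℝ) (hx : ∀ t, 0 ≤ x t) (hw : ∀ t, 0 ≤ w t)
    (hrec : ∀ t, x (t + 1) ^ 2 ≤ β * x t ^ 2 + γ * w t ^ 2 + ε)
    (hwt : ∀ t, w t ≤ r ^ t * w 0 + c) :
    ∀ t, 1 ≤ t →
      x t ^ 2 ≤ β ^ t * x 0 ^ 2
        + 2 * γ * w 0 ^ 2 * t * (max β (r ^ 2)) ^ (t - 1)
        + (2 * γ * c ^ 2 + ε) / (1 - β) :=
  stmt_16_general β γ ε r c hβ0 hβ1 hγ hε x w hw hrec hwt
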